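/- arXiv:2502.03839 — 8 statements merged into one kernel-verified Lean document; each statement's English description precedes it below -/
import Mathlib

section
/- For every even integer n ≥ 4 there exists a 2-XOR-BN on n nodes that has a control node set of size 2. -/
namespace BN

variable {n : ℕ}

/-- The Boolean function `f` depends on input `j`. -/
def Depends (f : (Fin n → Bool) → Bool) (j : Fin n) : Prop :=
  ∃ x : Fin n → Bool, f (Function.update x j (!(x j))) ≠ f x

/-- The set of incoming nodes of node `i` (Γ⁻). -/
def inSet (F : Fin n → (Fin n → Bool) → Bool) (i : Fin n) : Set (Fin n) :=
  {j | Depends (F i) j}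

/-- The set of outgoing nodes of node `i` (Γ⁺). -/
def outSet (F : Fin n → (Fin n → Bool) → Bool) (i : Fin n) : Set (Fin n) :=
  {j | Depends (F j) i}

/-- The controlled trajectory: nodes in `U` get an xor-control signal. -/
def traj (F : Fin n → (Fin n → Bool) → Bool) (U : Finset (Fin n))
    (u : ℕ → Fin n → Bool) (x0 : Fin n → Bool) : ℕ → Fin n → Bool
  | 0 => x0
  | t + 1 => fun i =>
      if i ∈ U then Bool.xor (u t i) (F i (traj F U u x0 t))
      else F i (traj F U u x0 t)

/-- `U` is a control node set: any initial state can be driven to any target state. -/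
def IsControlSet (F : Fin n → (Fin n → Bool) → Bool) (U : Finset (Fin n)) : Prop :=
  ∀ x0 xT : Fin n → Bool, ∃ t : ℕ, 1 ≤ t ∧ ∃ u : ℕ → Fin n → Bool, traj F U u x0 t = xT

/-- XOR (parity) of the inputs in `S`. -/
def xorFun (S : Finset (Fin n)) (x : Fin n → Bool) : Bool :=
  decide ((S.filter (fun j => x j = true)).card % 2 = 1)

/-- `f` is the XOR of `k` distinct inputs, or its negation. -/
def IsKXor (k : ℕ) (f : (Fin n → Bool) → Bool) : Prop :=
  ∃ S : Finset (Fin n), S.card = k ∧ (f = xorFun S ∨ f = fun x => !(xorFun S x))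

/-- A `k`-`k`-XOR-BN: each function is a `k`-input XOR (or negation) and
every node has indegree `k` and outdegree `k`. -/
def IsKKXorBN (k : ℕ) (F : Fin n → (Fin n → Bool) → Bool) : Prop :=
  (∀ i, IsKXor k (F i)) ∧ ∀ i, (inSet F i).ncard = k ∧ (outSet F i).ncard = k

-- ==== my aux ====

lemma xorFun_pair {a b : Fin n} (h : a ≠ b) :
    (fun x : Fin n → Bool => Bool.xor (x a) (x b)) = xorFun {a, b} := by
  funext x
  have : ({a, b} : Finset (Fin n)).filter (fun j => x j = true)
      = if x a then (if x b then {a, b} else {a}) else (if x b then {b} else ∅) := by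
    rw [show ({a,b} : Finset (Fin n)) = insert a {b} from rfl, Finset.filter_insert,
      Finset.filter_singleton]
    cases hx : x a <;> cases hy : x b <;> simp [hx, hy]
  cases hx : x a <;> cases hy : x b <;>
    simp [xorFun, this, hx, hy, Finset.card_insert_of_notMem, h]

lemma traj_of_seq (F : Fin n → (Fin n → Bool) → Bool) (U : Finset (Fin n))
    (x0 : Fin n → Bool) (k : ℕ) (y : ℕ → Fin n → Bool) (h0 : y 0 = x0)
    (hc : ∀ t < k, ∀ i, i ∉ U → y (t+1) i = F i (y t)) :
    ∃ u, ∀ t ≤ k, traj F U u x0 t = y t := by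
  refine ⟨fun t i => Bool.xor (y (t+1) i) (F i (y t)), ?_⟩
  intro t ht
  induction t with
  | zero => simpa [traj] using h0.symm
  | succ t ih =>
    have ih' := ih (by omega)
    funext i
    simp only [traj, ih']
    by_cases hi : i ∈ U
    · rw [if_pos hi]
      cases (y (t+1) i) <;> cases (F i (y t)) <;> rfl
    · rw [if_neg hi, (hc t (by omega) i hi).symm]

section Construct

variable (hn : 4 ≤ n)

def e0 : Fin n := ⟨0, by omega⟩
def e1 : Fin n := ⟨1, by omega⟩

def pmap : Fin n → Fin n := fun i => if i.val ≤ 2 then e0 hn else ⟨i.val - 1, by omega⟩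

def Fc : Fin n → (Fin n → Bool) → Bool := fun i x => Bool.xor (x (pmap hn i)) (x (e1 hn))

lemma pmap_ne (i : Fin n) : pmap hn i ≠ e1 hn := by
  unfold pmap
  split <;> simp [e0, e1, Fin.ext_iff] <;> omega

lemma Fc_isKXor (i : Fin n) : IsKXor 2 (Fc hn i) := by
  refine ⟨{pmap hn i, e1 hn}, ?_, Or.inl ?_⟩
  · rw [Finset.card_insert_of_notMem (by simp [pmap_ne hn i]), Finset.card_singleton]
  · exact xorFun_pair (pmap_ne hn i)

lemma reach : ∀ k, 1 ≤ k → ∀ x xT : Fin n → Bool,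
    ∃ y : ℕ → Fin n → Bool, y 0 = x ∧
      (∀ t < k, ∀ i : Fin n, 2 ≤ i.val → y (t+1) i = Fc hn i (y t)) ∧
      (y k (e0 hn) = xT (e0 hn)) ∧ (y k (e1 hn) = xT (e1 hn)) ∧
      (∀ i : Fin n, 2 ≤ i.val → i.val ≤ k → y k i = xT i) := by
  intro k hk
  induction k, hk using Nat.le_induction with
  | base =>
    intro x xT
    refine ⟨fun t => if t = 0 then x else
        (fun i => if i.val < 2 then xT i else Fc hn i x), rfl, ?_, ?_, ?_, ?_⟩
    · intro t ht i hi
      interval_cases t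
      simp [show ¬ (i.val < 2) by omega]
    · simp [e0]
    · simp [e1]
    · intro i h1 h2; omega
  | succ k hk ih =>
    intro x xT
    -- intermediate target
    set z : Fin n → Bool := fun j =>
      if j.val = 0 then xT ⟨2, by omega⟩
      else if j.val = 1 then false
      else if h : j.val + 1 < n then xT ⟨j.val + 1, h⟩ else false with hz
    obtain ⟨y, hy0, hyc, hye0, hye1, hyag⟩ := ih x z
    refine ⟨fun t => if t ≤ k then y t else
        (fun i => if i.val < 2 then xT i else Fc hn i (y k)), by simp [hy0], ?_, ?_, ?_, ?_⟩
    · intro t ht i hi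
      by_cases h : t < k
      · simp only [show t ≤ k by omega, show t + 1 ≤ k by omega, if_true]
        exact hyc t h i hi
      · have ht' : t = k := by omega
        subst ht'
        simp [show ¬ (k + 1 ≤ k) by omega, show ¬ (i.val < 2) by omega]
    · simp [show ¬ (k + 1 ≤ k) by omega, e0]
    · simp [show ¬ (k + 1 ≤ k) by omega, e1]
    · intro i h1 h2
      simp only [show ¬ (k + 1 ≤ k) by omega, if_false, show ¬ (i.val < 2) by omega,
        if_false]
      have hze1 : y k (e1 hn) = false := by rw [hye1]; simp [hz, e1]
      unfold Fc
      rw [hze1, Bool.xor_false]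
      by_cases h3 : i.val = 2
      · have : pmap hn i = e0 hn := by simp [pmap, h3]
        rw [this, hye0]
        have hi2 : i = ⟨2, by omega⟩ := Fin.ext h3
        have : z (e0 hn) = xT i := by rw [hi2]; simp [hz, e0]
        rw [this]
      · -- i.val ≥ 3
        have hp : pmap hn i = ⟨i.val - 1, by omega⟩ := by simp [pmap]; omega
        rw [hp, hyag ⟨i.val - 1, by omega⟩ (show 2 ≤ i.val - 1 by omega)
          (show i.val - 1 ≤ k by omega)]
        have hin : i.val < n := i.isLt
        have : z ⟨i.val - 1, by omega⟩ = xT i := by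
          show (if i.val - 1 = 0 then _ else if i.val - 1 = 1 then _
            else if h : i.val - 1 + 1 < n then xT ⟨i.val - 1 + 1, h⟩ else false) = xT i
          rw [if_neg (by omega), if_neg (by omega), dif_pos (by omega)]
          congr 1
          exact Fin.ext (show i.val - 1 + 1 = i.val by omega)
        rw [this]

end Construct

/-- For every even integer `n ≥ 4` there exists a 2-XOR-BN on `n` nodes
that has a control node set of size 2. -/
theorem stmt0 (n : ℕ) (hn : 4 ≤ n) (hne : Even n) :
    ∃ F : Fin n → (Fin n → Bool) → Bool,
      (∀ i, IsKXor 2 (F i)) ∧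
      ∃ U : Finset (Fin n), IsControlSet F U ∧ U.card = 2 := by
  refine ⟨Fc hn, Fc_isKXor hn, {e0 hn, e1 hn}, ?_, ?_⟩
  · intro x0 xT
    refine ⟨n - 1, by omega, ?_⟩
    obtain ⟨y, hy0, hyc, he0, he1, hag⟩ := reach hn (n - 1) (by omega) x0 xT
    have hcomp : ∀ t < n - 1, ∀ i, i ∉ ({e0 hn, e1 hn} : Finset (Fin n)) →
        y (t+1) i = Fc hn i (y t) := by
      intro t ht i hi
      have h2 : 2 ≤ i.val := by
        simp only [Finset.mem_insert, Finset.mem_singleton] at hi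
        push_neg at hi
        have h1 := hi.1; have h2 := hi.2
        simp only [ne_eq, Fin.ext_iff] at h1 h2
        simp only [e0, e1] at h1 h2
        omega
      exact hyc t ht i h2
    obtain ⟨u, hu⟩ := traj_of_seq (Fc hn) {e0 hn, e1 hn} x0 (n - 1) y hy0 hcomp
    refine ⟨u, ?_⟩
    rw [hu (n - 1) le_rfl]
    funext i
    by_cases h0 : i.val = 0
    · rw [show i = e0 hn from Fin.ext h0]; exact he0
    · by_cases h1 : i.val = 1
      · rw [show i = e1 hn from Fin.ext h1]; exact he1
      · exact hag i (by omega) (by have := i.isLt; omega)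
  · rw [Finset.card_insert_of_notMem (by simp [e0, e1, Fin.ext_iff]),
      Finset.card_singleton]


end BN
end

section
/- Let G be a finite directed graph on n = 3m vertices in which every vertex has indegree 2 and outdegree 2 (the underlying graph of any 2-2-XOR-BN). Then there exists a subset V_1 of the vertex set with |V_1| = m such that Γ⁺(x_i) ∩ Γ⁺(x_j) = ∅ for all distinct x_i, x_j ∈ V_1. -/
/-!
Call two vertices in conflict when their out-neighbourhoods meet. A vertex `i` has two
out-neighbours, each of which has exactly one in-neighbour besides `i`, so `i` is in conflict
with at most two other vertices. Greedily picking a vertex and discarding its conflicts then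
yields a conflict-free set of at least `3m / 3 = m` vertices.
-/

open Finset

namespace SimpleGraph

variable {α : Type*} [DecidableEq α] (G : SimpleGraph α) [DecidableRel G.Adj]

theorem exists_isIndepSet_subset_of_card_adj_le {d : ℕ} (S : Finset α)
    (hd : ∀ a ∈ S, #{b ∈ S | G.Adj a b} ≤ d) :
    ∃ T ⊆ S, #S ≤ (d + 1) * #T ∧ G.IsIndepSet (T : Set α) := by
  induction S using Finset.strongInduction with
  | H S ih =>
    rcases S.eq_empty_or_nonempty with rfl | ⟨v, hv⟩
    · exact ⟨∅, empty_subset _, by simp, by simp⟩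
    set N := {b ∈ S | G.Adj v b}
    set S' := S \ insert v N
    have hS'S : S' ⊆ S := sdiff_subset
    have hvS' : v ∉ S' := fun h => (mem_sdiff.1 h).2 (mem_insert_self _ _)
    obtain ⟨T, hTS', hcardT, hT⟩ := ih S' (ssubset_of_subset_of_ne hS'S fun h => hvS' (h ▸ hv))
      fun a ha => (card_le_card (filter_subset_filter _ hS'S)).trans (hd a (hS'S ha))
    have hcardS : #S ≤ #S' + (d + 1) :=
      calc #S ≤ #S' + #(insert v N) := card_le_card_sdiff_add_card
        _ ≤ #S' + (d + 1) := by grw [card_insert_le, hd v hv]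
    have hvT : ∀ b ∈ T, ¬G.Adj v b := fun b hb hvb =>
      (mem_sdiff.1 (hTS' hb)).2 (mem_insert_of_mem (mem_filter.2 ⟨hS'S (hTS' hb), hvb⟩))
    refine ⟨insert v T, insert_subset hv (hTS'.trans hS'S), ?_, ?_⟩
    · rw [card_insert_of_notMem fun h => hvS' (hTS' h)]
      linarith
    · rw [coe_insert]
      exact hT.insert fun b hb _ => ⟨hvT b hb, fun hbv => hvT b hb hbv.symm⟩

end SimpleGraph

section Overlap

variable {ι β : Type*}

def overlapGraph (A : ι → Finset β) : SimpleGraph ι where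
  Adj i j := i ≠ j ∧ ¬Disjoint (A i) (A j)
  symm := ⟨fun _ _ h => ⟨h.1.symm, fun hd => h.2 hd.symm⟩⟩
  loopless := ⟨fun _ h => h.1 rfl⟩

variable (A : ι → Finset β)

theorem isIndepSet_overlapGraph_iff {T : Set ι} :
    (overlapGraph A).IsIndepSet T ↔ T.Pairwise fun i j => Disjoint (A i) (A j) :=
  ⟨fun h _ hi _ hj hij => by simpa [overlapGraph, hij] using h hi hj hij,
    fun h _ hi _ hj hij hadj => hadj.2 (h hi hj hij)⟩

variable [DecidableEq ι] [DecidableEq β]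

instance : DecidableRel (overlapGraph A).Adj :=
  fun i j => inferInstanceAs (Decidable (i ≠ j ∧ ¬Disjoint (A i) (A j)))

theorem card_adj_overlapGraph_le [Fintype ι] {k : ℕ} (hk : ∀ b, #{i | b ∈ A i} ≤ k) (i : ι) :
    #{j | (overlapGraph A).Adj i j} ≤ #(A i) * (k - 1) := by
  have hcover : ({j | (overlapGraph A).Adj i j} : Finset ι) ⊆
      (A i).biUnion fun b => ({j | b ∈ A j} : Finset ι).erase i := by
    intro j hj
    obtain ⟨hij, hmeet⟩ := (mem_filter.1 hj).2
    obtain ⟨b, hbi, hbj⟩ := not_disjoint_iff.1 hmeet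
    exact mem_biUnion.2 ⟨b, hbi, mem_erase.2 ⟨Ne.symm hij, mem_filter.2 ⟨mem_univ _, hbj⟩⟩⟩
  refine (card_le_card hcover).trans (card_biUnion_le_card_mul _ _ _ fun b hb => ?_)
  rw [card_erase_of_mem (s := ({j | b ∈ A j} : Finset ι)) (by simpa using hb)]
  exact Nat.sub_le_sub_right (hk b) 1

end Overlap

theorem stmt2_general (m : ℕ) (A : Fin (3 * m) → Finset (Fin (3 * m)))
    (hout : ∀ i, (A i).card = 2)
    (hin : ∀ i, (Finset.univ.filter fun j => i ∈ A j).card = 2) :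
    ∃ V1 : Finset (Fin (3 * m)), V1.card = m ∧
      ∀ i ∈ V1, ∀ j ∈ V1, i ≠ j → A i ∩ A j = ∅ := by
  have hdeg : ∀ i ∈ univ, #{j ∈ univ | (overlapGraph A).Adj i j} ≤ 2 := fun i _ => by
    simpa [hout] using card_adj_overlapGraph_le A (fun b => (hin b).le) i
  obtain ⟨T, -, hcard, hT⟩ :=
    (overlapGraph A).exists_isIndepSet_subset_of_card_adj_le univ hdeg
  obtain ⟨V1, hV1T, hV1⟩ := exists_subset_card_eq (show m ≤ #T by rw [card_univ, Fintype.card_fin] at hcard; omega)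
  refine ⟨V1, hV1, fun i hi j hj hij => disjoint_iff_inter_eq_empty.1 ?_⟩
  exact (isIndepSet_overlapGraph_iff A).1 hT (hV1T hi) (hV1T hj) hij

/-- In any finite directed graph on `n = 3m` vertices in which every
vertex has indegree 2 and outdegree 2 (out-neighborhoods given by `A`), there is a
set `V₁` of `m` vertices whose out-neighborhoods are pairwise disjoint. -/
theorem stmt2 (m : ℕ) (hm : 0 < m) (A : Fin (3 * m) → Finset (Fin (3 * m)))
    (hout : ∀ i, (A i).card = 2)
    (hin : ∀ i, (Finset.univ.filter fun j => i ∈ A j).card = 2) :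
    ∃ V1 : Finset (Fin (3 * m)), V1.card = m ∧
      ∀ i ∈ V1, ∀ j ∈ V1, i ≠ j → A i ∩ A j = ∅ :=
  stmt2_general m A hout hin
end

section
/- Suppose n = 3m for some integer m > 1, and let N be a 2-2-XOR-BN on n nodes. Let V_1 be a set of m nodes with pairwise disjoint out-neighborhoods (Γ⁺(x_i) ∩ Γ⁺(x_j) = ∅ for distinct x_i, x_j ∈ V_1), and suppose that every node x_i ∈ V_1 satisfies Γ⁺(x_i) ∩ V_1 ≠ ∅ (i.e., V_1^0 = ∅). Then N has a control node set of size (2/3)n. -/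
namespace BN

variable {n : ℕ}

lemma xorFun_eq_on {S : Finset (Fin n)} {x y : Fin n → Bool}
    (h : ∀ j ∈ S, x j = y j) : xorFun S x = xorFun S y := by
  have hf : S.filter (fun j => x j = true) = S.filter (fun j => y j = true) :=
    Finset.filter_congr (fun j hj => by rw [h j hj])
  unfold xorFun
  rw [hf]

lemma xorFun_flip {S : Finset (Fin n)} {j : Fin n} (hj : j ∈ S) (x : Fin n → Bool) :
    xorFun S (Function.update x j (!(x j))) = !(xorFun S x) := by
  classical
  unfold xorFun
  rw [← decide_not]
  cases hxj : x j with
  | false =>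
    simp only [Bool.not_false]
    have hfil : S.filter (fun i => Function.update x j true i = true)
        = insert j (S.filter (fun i => x i = true)) := by
      ext i
      by_cases hij : i = j
      · subst hij
        simp [Function.update_self, hxj, hj]
      · simp [Function.update_of_ne hij, hij]
    have hjn : j ∉ S.filter (fun i => x i = true) := by simp [hxj]
    rw [hfil, Finset.card_insert_of_notMem hjn]
    exact decide_eq_decide.mpr (by omega)
  | true =>
    simp only [Bool.not_true]
    have hfil : S.filter (fun i => Function.update x j false i = true)
        = (S.filter (fun i => x i = true)).erase j := by
      ext i
      by_cases hij : i = j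
      · subst hij
        simp [Function.update_self, hxj]
      · simp [Function.update_of_ne hij, hij]
    have hjm : j ∈ S.filter (fun i => x i = true) := by simp [hxj, hj]
    have hpos : 1 ≤ (S.filter (fun i => x i = true)).card := Finset.card_pos.mpr ⟨j, hjm⟩
    rw [hfil, Finset.card_erase_of_mem hjm]
    exact decide_eq_decide.mpr (by omega)

lemma depends_iff {S : Finset (Fin n)} {f : (Fin n → Bool) → Bool}
    (hf : f = xorFun S ∨ f = fun x => !(xorFun S x)) (j : Fin n) :
    Depends f j ↔ j ∈ S := by
  constructor
  · rintro ⟨x, hx⟩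
    by_contra hjS
    apply hx
    have heq : xorFun S (Function.update x j (!(x j))) = xorFun S x :=
      xorFun_eq_on (fun i hi => Function.update_of_ne (fun h => hjS (by rw [← h]; exact hi)) _ _)
    rcases hf with rfl | rfl
    · exact heq
    · simp only [heq]
  · intro hjS
    refine ⟨fun _ => false, ?_⟩
    rcases hf with rfl | rfl
    · rw [xorFun_flip hjS]
      simp
    · simp only [xorFun_flip hjS]
      simp

/-- If `n = 3m` with `m > 1`, `N` is a 2-2-XOR-BN, and `V₁` is a set of `m`
nodes with pairwise disjoint out-neighborhoods each meeting `V₁` (i.e. `V₁⁰ = ∅`),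
then `N` has a control node set of size `(2/3)·n = 2m`. -/
theorem stmt4 (m n : ℕ) (hm : 1 < m) (hn : n = 3 * m)
    (F : Fin n → (Fin n → Bool) → Bool) (hF : IsKKXorBN 2 F)
    (V1 : Finset (Fin n)) (hV1card : V1.card = m)
    (hdisj : ∀ i ∈ V1, ∀ j ∈ V1, i ≠ j → outSet F i ∩ outSet F j = ∅)
    (hV10 : ∀ i ∈ V1, (outSet F i ∩ ↑V1).Nonempty) :
    ∃ U : Finset (Fin n), IsControlSet F U ∧ U.card = 2 * m := by
  classical
  obtain ⟨hXor, hdeg⟩ := hF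
  choose S hScard hSspec using hXor
  have hdep : ∀ i j : Fin n, Depends (F i) j ↔ j ∈ S i := fun i j => depends_iff (hSspec i) j
  set OS : Fin n → Finset (Fin n) := fun k => Finset.univ.filter (fun j => k ∈ S j) with hOSdef
  have hOSmem : ∀ k j : Fin n, j ∈ OS k ↔ k ∈ S j := by
    intro k j; simp [hOSdef]
  have houtSet : ∀ k : Fin n, outSet F k = ↑(OS k) := by
    intro k
    ext j
    simp only [outSet, Set.mem_setOf_eq, Finset.coe_filter, hOSdef, Finset.mem_univ, true_and,
      Set.mem_setOf_eq]
    exact hdep j k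
  have hOScard : ∀ k : Fin n, (OS k).card = 2 := by
    intro k
    have h2 := (hdeg k).2
    rw [houtSet k, Set.ncard_coe_finset] at h2
    exact h2
  -- exactly one out-neighbor in V1
  have hTdisj : ∀ k ∈ V1, ∀ k' ∈ V1, k ≠ k' → Disjoint (OS k ∩ V1) (OS k' ∩ V1) := by
    intro k hk k' hk' hne
    rw [Finset.disjoint_left]
    intro j hj hj'
    have hmem : (j : Fin n) ∈ outSet F k ∩ outSet F k' := by
      constructor
      · rw [houtSet k]; exact_mod_cast (Finset.mem_inter.mp hj).1
      · rw [houtSet k']; exact_mod_cast (Finset.mem_inter.mp hj').1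
    rw [hdisj k hk k' hk' hne] at hmem
    exact hmem
  have hTpos : ∀ k ∈ V1, 1 ≤ (OS k ∩ V1).card := by
    intro k hk
    obtain ⟨j, hj1, hj2⟩ := hV10 k hk
    rw [houtSet k] at hj1
    exact Finset.card_pos.mpr ⟨j, Finset.mem_inter.mpr ⟨by exact_mod_cast hj1, by exact_mod_cast hj2⟩⟩
  have hsub : V1.biUnion (fun k => OS k ∩ V1) ⊆ V1 := by
    intro j hj
    obtain ⟨k, hk, hjk⟩ := Finset.mem_biUnion.mp hj
    exact (Finset.mem_inter.mp hjk).2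
  have hsum : ∑ k ∈ V1, (OS k ∩ V1).card ≤ m := by
    rw [← Finset.card_biUnion hTdisj]
    calc (V1.biUnion (fun k => OS k ∩ V1)).card ≤ V1.card := Finset.card_le_card hsub
      _ = m := hV1card
  have hone : ∀ k ∈ V1, (OS k ∩ V1).card = 1 := by
    intro k hk
    by_contra hne
    have hlt : ∑ _k ∈ V1, 1 < ∑ k ∈ V1, (OS k ∩ V1).card :=
      Finset.sum_lt_sum (fun i hi => hTpos i hi) ⟨k, hk, by have := hTpos k hk; omega⟩
    rw [Finset.sum_const, smul_eq_mul, mul_one, hV1card] at hlt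
    omega
  have hsdiff : ∀ k ∈ V1, (OS k \ V1).card = 1 := by
    intro k hk
    have h1 := Finset.card_inter_add_card_sdiff (OS k) V1
    have h2 := hone k hk
    have h3 := hOScard k
    omega
  have hex : ∀ k : Fin n, ∃ a : Fin n, k ∈ V1 → OS k \ V1 = {a} := by
    intro k
    by_cases hk : k ∈ V1
    · obtain ⟨a, ha⟩ := Finset.card_eq_one.mp (hsdiff k hk)
      exact ⟨a, fun _ => ha⟩
    · exact ⟨k, fun h => absurd h hk⟩
  choose other hother using hex
  have hmemOS : ∀ k ∈ V1, other k ∈ OS k ∧ other k ∉ V1 := by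
    intro k hk
    have : other k ∈ OS k \ V1 := by
      rw [hother k hk]; exact Finset.mem_singleton_self _
    exact Finset.mem_sdiff.mp this
  have hinj : ∀ k ∈ V1, ∀ k' ∈ V1, other k = other k' → k = k' := by
    intro k hk k' hk' heq
    by_contra hne
    have h1 : (other k : Fin n) ∈ outSet F k ∩ outSet F k' := by
      constructor
      · rw [houtSet k]; exact_mod_cast (hmemOS k hk).1
      · rw [houtSet k']; rw [heq]; exact_mod_cast (hmemOS k' hk').1
    rw [hdisj k hk k' hk' hne] at h1
    exact h1
  have hkS : ∀ k ∈ V1, k ∈ S (other k) := by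
    intro k hk
    exact (hOSmem k (other k)).mp (hmemOS k hk).1
  have hprivate : ∀ k ∈ V1, ∀ d ∈ S (other k), d ∈ V1 → d = k := by
    intro k hk d hd hdV1
    have h1 : other k ∈ OS d := (hOSmem d (other k)).mpr hd
    have h2 : other k ∈ OS d \ V1 := Finset.mem_sdiff.mpr ⟨h1, (hmemOS k hk).2⟩
    rw [hother d hdV1] at h2
    have h3 : other k = other d := Finset.mem_singleton.mp h2
    exact (hinj k hk d hdV1 h3).symm
  -- define W and U
  set W : Finset (Fin n) := V1.image other with hWdef
  have hWcard : W.card = m := by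
    rw [hWdef, Finset.card_image_of_injOn (fun a ha b hb h => hinj a ha b hb h), hV1card]
  have hWnotV1 : ∀ i ∈ W, i ∉ V1 := by
    intro i hi
    obtain ⟨k, hk, rfl⟩ := Finset.mem_image.mp hi
    exact (hmemOS k hk).2
  refine ⟨Wᶜ, ?_, ?_⟩
  swap
  · rw [Finset.card_compl, hWcard, Fintype.card_fin, hn]
    omega
  -- control in two steps
  intro x0 xT
  obtain ⟨y, hy⟩ : ∃ y : Fin n → Bool, ∀ i ∈ W, y i = F i x0 :=
    ⟨fun i => if i ∈ W then F i x0 else false, fun i hi => by simp [hi]⟩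
  have hsolve : ∀ k : Fin n, ∃ b : Bool, k ∈ V1 →
      F (other k) (Function.update y k b) = xT (other k) := by
    intro k
    by_cases hk : k ∈ V1
    · have hkmem : k ∈ S (other k) := hkS k hk
      have hflip : F (other k) (Function.update y k true)
          = !(F (other k) (Function.update y k false)) := by
        have hx : Function.update y k true
            = Function.update (Function.update y k false) k
                (!(Function.update y k false k)) := by
          simp [Function.update_idem]
        rcases hSspec (other k) with hf | hf
        · rw [hf, hx, xorFun_flip hkmem]
        · simp only [hf]
          rw [hx, xorFun_flip hkmem]
      by_cases hc : F (other k) (Function.update y k false) = xT (other k)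
      · exact ⟨false, fun _ => hc⟩
      · refine ⟨true, fun _ => ?_⟩
        rw [hflip]
        have hne : ∀ b c : Bool, b ≠ c → (!b) = c := by decide
        exact hne _ _ hc
    · exact ⟨false, fun h => absurd h hk⟩
  choose g hg using hsolve
  obtain ⟨x1, hx1V, hx1N⟩ : ∃ x1 : Fin n → Bool,
      (∀ i ∈ V1, x1 i = g i) ∧ (∀ i : Fin n, i ∉ V1 → x1 i = y i) :=
    ⟨fun i => if i ∈ V1 then g i else y i,
     fun i hi => by simp [hi], fun i hi => by simp [hi]⟩
  set u : ℕ → Fin n → Bool := fun t i =>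
    if t = 0 then Bool.xor (x1 i) (F i x0) else Bool.xor (xT i) (F i x1) with hudef
  have hxorcancel : ∀ a b : Bool, Bool.xor (Bool.xor a b) b = a := by decide
  have e : ∀ t, traj F Wᶜ u x0 (t + 1) = fun i =>
      if i ∈ Wᶜ then Bool.xor (u t i) (F i (traj F Wᶜ u x0 t)) else F i (traj F Wᶜ u x0 t) :=
    fun t => rfl
  have e0 : traj F Wᶜ u x0 0 = x0 := rfl
  have h1 : traj F Wᶜ u x0 1 = x1 := by
    have e1 : traj F Wᶜ u x0 1 = fun i =>
        if i ∈ Wᶜ then Bool.xor (u 0 i) (F i x0) else F i x0 := e 0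
    rw [e1]
    funext i
    by_cases hiU : i ∈ Wᶜ
    · rw [if_pos hiU]
      simp only [hudef, if_pos rfl]
      exact hxorcancel _ _
    · rw [if_neg hiU]
      have hiW : i ∈ W := by
        by_contra h
        exact hiU (Finset.mem_compl.mpr h)
      rw [hx1N i (hWnotV1 i hiW), hy i hiW]
  have h2 : traj F Wᶜ u x0 2 = xT := by
    have e2 : traj F Wᶜ u x0 2 = fun i =>
        if i ∈ Wᶜ then Bool.xor (u 1 i) (F i (traj F Wᶜ u x0 1)) else F i (traj F Wᶜ u x0 1) :=
      e 1
    rw [e2, h1]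
    funext i
    by_cases hiU : i ∈ Wᶜ
    · rw [if_pos hiU]
      simp only [hudef, if_neg one_ne_zero]
      exact hxorcancel _ _
    · rw [if_neg hiU]
      have hiW : i ∈ W := by
        by_contra h
        exact hiU (Finset.mem_compl.mpr h)
      obtain ⟨k, hk, rfl⟩ := Finset.mem_image.mp hiW
      have hagree : ∀ d ∈ S (other k), x1 d = Function.update y k (g k) d := by
        intro d hd
        by_cases hdk : d = k
        · subst hdk
          rw [hx1V d hk, Function.update_self]
        · have hdV1 : d ∉ V1 := fun h => hdk (hprivate k hk d hd h)
          rw [hx1N d hdV1, Function.update_of_ne hdk]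
      have hFeq : F (other k) x1 = F (other k) (Function.update y k (g k)) := by
        rcases hSspec (other k) with hf | hf
        · rw [hf]; exact xorFun_eq_on hagree
        · simp only [hf]
          rw [xorFun_eq_on hagree]
      rw [hFeq]
      exact hg k hk
  exact ⟨2, one_le_two, u, h2⟩


end BN
end

section
/- Let k ≥ 2 and suppose n = (k(k−1)+1)m for a positive integer m with m ≡ 0 (mod k). Then every k-k-XOR-BN on n nodes has a control node set of size at most [1 − (k−1)/(k(k²−k+1))]·n. -/
namespace BN

variable {n : ℕ}

/-!
Leave uncontrolled a set `W` of nodes each having a private input `ρ j`: an input of `j` outside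
`W` that feeds no other node of `W`; control all other nodes. After one step the nodes of `W` hold
forced values and the controlled nodes arbitrary ones; since flipping one input of an XOR flips its
output, the private inputs can be set so that every `j ∈ W` computes its target bit at the second
step, while the controlled nodes reach theirs directly.

`W` is grown greedily. Let `P` consist of the nodes of `W` and their non-private inputs, at most
`k * #W` nodes. A node `i` can be added, with an input outside `P` as private input, unless it lies
in `ρ '' W`, is fed by some `ρ j`, or has all its inputs other than itself in `P`. Each node of the
last kind, and each node of `W`, has at least `k - 1` inputs in `P`, while each node of `P` has
at most `k` outputs; this double count bounds the excluded nodes by `#W * k * (2k - 1) / (k - 1)`.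
Hence `W` can reach size `(k - 1) * m / k`, because `2k - 1 ≤ k² - k + 1`.
-/

open Finset Function

section PrivateInputs

variable {α : Type*} [DecidableEq α] {S : α → Finset α} {W : Finset α} {ρ : α → α}

def PrivateInputs (S : α → Finset α) (W : Finset α) (ρ : α → α) : Prop :=
  ∀ j ∈ W, ρ j ∈ S j ∧ ρ j ∉ W ∧ ∀ j' ∈ W, j' ≠ j → ρ j ∉ S j'

theorem PrivateInputs.eq_of_mem (hρ : PrivateInputs S W ρ) {j j' : α} (hj : j ∈ W)
    (hj' : j' ∈ W) (h : ρ j' ∈ S j) : j' = j := by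
  by_contra hne
  exact (hρ j' hj').2.2 j hj (Ne.symm hne) h

theorem PrivateInputs.extend (hρ : PrivateInputs S W ρ) {i u : α} (hiρ : i ∉ W.image ρ)
    (hiS : ∀ j ∈ W, ρ j ∉ S i) (hu : u ∈ S i) (hui : u ≠ i) (huW : u ∉ W)
    (huS : ∀ j ∈ W, u ∉ S j) :
    PrivateInputs S (insert i W) (update ρ i u) := by
  have hiW : i ∉ W := fun h => hiS i h (hρ i h).1
  intro j hj
  rcases mem_insert.mp hj with rfl | hjW
  · refine ⟨by simpa using hu, by simp [hui, huW], fun j' hj' hne => ?_⟩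
    simpa using huS j' ((mem_insert.mp hj').resolve_left hne)
  · have hji : j ≠ i := ne_of_mem_of_not_mem hjW hiW
    obtain ⟨hρS, hρW, hρpriv⟩ := hρ j hjW
    refine ⟨by simpa [hji] using hρS, ?_, fun j' hj' hne => ?_⟩
    · have : ρ j ≠ i := fun h => hiρ (h ▸ mem_image_of_mem ρ hjW)
      simp [hji, this, hρW]
    · rw [update_of_ne hji]
      rcases mem_insert.mp hj' with rfl | hj'W
      · exact hiS j hjW
      · exact hρpriv j' hj'W hne

variable [Fintype α] {k : ℕ}

theorem card_mul_pred_le_of_forall_erase_subset (hS : ∀ i, #(S i) = k)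
    (hout : ∀ u, #{j | u ∈ S j} ≤ k) {X P : Finset α}
    (hX : ∀ i ∈ X, ∃ v, (S i).erase v ⊆ P) : #X * (k - 1) ≤ #P * k := by
  refine card_mul_le_card_mul (fun i u => u ∈ S i) (fun i hi => ?_)
    fun u _ => (card_le_card (filter_subset_filter _ (subset_univ X))).trans (hout u)
  obtain ⟨v, hv⟩ := hX i hi
  calc k - 1 = #(S i) - 1 := by rw [hS]
    _ ≤ #((S i).erase v) := pred_card_le_card_erase
    _ ≤ #(P.bipartiteAbove (fun i u => u ∈ S i) i) :=
      card_le_card fun q hq => mem_filter.mpr ⟨hv hq, mem_of_mem_erase hq⟩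

theorem PrivateInputs.exists_extend (hS : ∀ i, #(S i) = k) (hout : ∀ u, #{j | u ∈ S j} ≤ k)
    (hρ : PrivateInputs S W ρ) (hW : #W * (k * (2 * k - 1)) < (k - 1) * Fintype.card α) :
    ∃ i u, i ∉ W ∧ PrivateInputs S (insert i W) (update ρ i u) := by
  set P := W.biUnion fun j => insert j ((S j).erase (ρ j))
  set B := W.biUnion fun j => ({i | ρ j ∈ S i} : Finset α)
  set T := ({i | i ∉ B ∧ (S i).erase i ⊆ P} : Finset α)
  have hP : #P ≤ #W * k := card_biUnion_le_card_mul _ _ _ fun j hj =>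
    (card_insert_le _ _).trans (by rw [card_erase_add_one (hρ j hj).1, hS])
  have hB : #B ≤ #W * k := card_biUnion_le_card_mul _ _ _ fun j _ => hout (ρ j)
  have hWB : W ⊆ B := fun j hj => mem_biUnion.mpr ⟨j, hj, by simpa using (hρ j hj).1⟩
  have hT : (#T + #W) * (k - 1) ≤ #P * k := by
    rw [← card_union_of_disjoint
      (disjoint_left.mpr fun i hi hiW => (mem_filter.mp hi).2.1 (hWB hiW))]
    refine card_mul_pred_le_of_forall_erase_subset hS hout fun i hi => ?_
    rcases mem_union.mp hi with hiT | hiW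
    · exact ⟨i, (mem_filter.mp hiT).2.2⟩
    · exact ⟨ρ i, fun q hq => mem_biUnion.mpr ⟨i, hiW, mem_insert_of_mem hq⟩⟩
  have hexcluded : #(W.image ρ ∪ B ∪ T) < Fintype.card α := by
    have hcard : #(W.image ρ ∪ B ∪ T) ≤ #W + #W * k + #T :=
      (card_union_le _ _).trans (Nat.add_le_add_right ((card_union_le _ _).trans
        (add_le_add card_image_le hB)) _)
    refine Nat.lt_of_mul_lt_mul_left (a := k - 1) (lt_of_le_of_lt ?_ hW)
    rcases k with _ | k
    · simp
    · rw [show 2 * (k + 1) - 1 = 2 * k + 1 by omega]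
      simp only [Nat.add_sub_cancel] at hT ⊢
      nlinarith [Nat.mul_le_mul_left k hcard, Nat.mul_le_mul_right (k + 1) hP]
  obtain ⟨i, -, hi⟩ :=
    exists_mem_notMem_of_card_lt_card (s := W.image ρ ∪ B ∪ T) (t := univ) (by rwa [card_univ])
  simp only [mem_union, not_or] at hi
  obtain ⟨⟨hiρ, hiB⟩, hiT⟩ := hi
  have hiS : ∀ j ∈ W, ρ j ∉ S i := fun j hj h =>
    hiB (mem_biUnion.mpr ⟨j, hj, by simpa using h⟩)
  obtain ⟨u, hu, huP⟩ := not_subset.mp fun h => hiT (mem_filter.mpr ⟨mem_univ _, hiB, h⟩)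
  refine ⟨i, u, fun h => hiS i h (hρ i h).1,
    hρ.extend hiρ hiS (mem_of_mem_erase hu) (ne_of_mem_erase hu)
      (fun h => huP (mem_biUnion.mpr ⟨u, h, mem_insert_self _ _⟩)) fun j hj huj => ?_⟩
  by_cases h : u = ρ j
  · exact hiS j hj (h ▸ mem_of_mem_erase hu)
  · exact huP (mem_biUnion.mpr ⟨j, hj, mem_insert_of_mem (mem_erase.mpr ⟨h, huj⟩)⟩)

theorem exists_privateInputs (hk : 0 < k) (hS : ∀ i, #(S i) = k)
    (hout : ∀ u, #{j | u ∈ S j} ≤ k) {w : ℕ}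
    (hw : w * (k * (2 * k - 1)) ≤ (k - 1) * Fintype.card α) :
    ∃ W ρ, #W = w ∧ PrivateInputs S W ρ := by
  induction w with
  | zero => exact ⟨∅, id, rfl, by simp [PrivateInputs]⟩
  | succ w ih =>
    have hpos : 0 < k * (2 * k - 1) := Nat.mul_pos hk (by omega)
    obtain ⟨W, ρ, rfl, hρ⟩ := ih ((Nat.mul_le_mul_right _ w.le_succ).trans hw)
    obtain ⟨i, u, hiW, hext⟩ := hρ.exists_extend hS hout
      (lt_of_lt_of_le ((Nat.mul_lt_mul_right hpos).mpr (#W).lt_succ_self) hw)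
    exact ⟨_, _, card_insert_of_notMem hiW, hext⟩

end PrivateInputs

section Parity

variable {S : Finset (Fin n)} {f : (Fin n → Bool) → Bool}

def IsParity (S : Finset (Fin n)) (f : (Fin n → Bool) → Bool) : Prop :=
  f = xorFun S ∨ f = fun x => !xorFun S x

theorem xorFun_congr {x y : Fin n → Bool} (h : ∀ j ∈ S, x j = y j) :
    xorFun S x = xorFun S y := by
  rw [xorFun, xorFun, filter_congr fun j hj => by rw [h j hj]]

theorem card_filter_eq_add_erase {p : Fin n} (hp : p ∈ S) (x : Fin n → Bool) :
    #(S.filter (x · = true)) = (if x p then 1 else 0) + #((S.erase p).filter (x · = true)) := by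
  simp only [card_filter, ← add_sum_erase S _ hp]

theorem xorFun_update_not {p : Fin n} (hp : p ∈ S) (x : Fin n → Bool) :
    xorFun S (update x p (!x p)) = !xorFun S x := by
  have hrest :
      (S.erase p).filter (update x p (!x p) · = true) = (S.erase p).filter (x · = true) :=
    filter_congr fun j hj => by rw [update_of_ne (ne_of_mem_erase hj)]
  simp only [xorFun, card_filter_eq_add_erase hp, hrest, update_self]
  generalize #((S.erase p).filter (x · = true)) = c
  cases x p <;> rcases Nat.mod_two_eq_zero_or_one c with h | h <;> simp [h, Nat.add_mod]

theorem IsParity.congr (hf : IsParity S f) {x y : Fin n → Bool} (h : ∀ j ∈ S, x j = y j) :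
    f x = f y := by
  rcases hf with rfl | rfl <;> simp only [xorFun_congr h]

theorem IsParity.update_not (hf : IsParity S f) {p : Fin n} (hp : p ∈ S) (x : Fin n → Bool) :
    f (update x p (!x p)) = !f x := by
  rcases hf with rfl | rfl <;> simp only [xorFun_update_not hp]

theorem IsParity.update_xor (hf : IsParity S f) {p : Fin n} (hp : p ∈ S) (x : Fin n → Bool)
    (d : Bool) : f (update x p (x p ^^ d)) = (f x ^^ d) := by
  cases d <;> simp [hf.update_not hp]

theorem IsParity.depends_iff (hf : IsParity S f) (q : Fin n) : Depends f q ↔ q ∈ S := by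
  constructor
  · rintro ⟨x, hx⟩
    by_contra hq
    exact hx (hf.congr fun j hj => update_of_ne (ne_of_mem_of_not_mem hj hq) _ _)
  · exact fun hq => ⟨fun _ => false, by rw [hf.update_not hq]; exact Bool.not_ne_self _⟩

theorem outSet_eq_of_isParity {S : Fin n → Finset (Fin n)}
    {F : Fin n → (Fin n → Bool) → Bool} (hS : ∀ j, IsParity (S j) (F j)) (u : Fin n) :
    outSet F u = ↑({j | u ∈ S j} : Finset (Fin n)) := by
  ext j
  simp [outSet, (hS j).depends_iff]

end Parity

section Control

variable {F : Fin n → (Fin n → Bool) → Bool} {U : Finset (Fin n)}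

theorem traj_succ_eq {u : ℕ → Fin n → Bool} {x0 y : Fin n → Bool} {t : ℕ}
    (hy : ∀ i ∉ U, y i = F i (traj F U u x0 t))
    (hu : ∀ i ∈ U, u t i = (y i ^^ F i (traj F U u x0 t))) :
    traj F U u x0 (t + 1) = y := by
  funext i
  simp only [traj]
  split_ifs with hi
  · simp [hu i hi]
  · exact (hy i hi).symm

theorem isControlSet_of_twoSteps
    (h : ∀ x0 xT : Fin n → Bool, ∃ x1 : Fin n → Bool,
      (∀ i ∉ U, x1 i = F i x0) ∧ ∀ i ∉ U, xT i = F i x1) :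
    IsControlSet F U := by
  intro x0 xT
  obtain ⟨x1, h1, h2⟩ := h x0 xT
  let u : ℕ → Fin n → Bool := fun t i => if t = 0 then x1 i ^^ F i x0 else xT i ^^ F i x1
  have hx1 : traj F U u x0 1 = x1 := traj_succ_eq h1 fun i _ => rfl
  exact ⟨2, one_le_two, u, traj_succ_eq (by rwa [hx1]) fun i _ => by rw [hx1]; rfl⟩

theorem isControlSet_compl_of_privateInputs {S : Fin n → Finset (Fin n)} {W : Finset (Fin n)}
    {ρ : Fin n → Fin n} (hρ : PrivateInputs S W ρ)
    (hcongr : ∀ j ∈ W, ∀ x y : Fin n → Bool, (∀ q ∈ S j, x q = y q) → F j x = F j y)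
    (hflip : ∀ j ∈ W, ∀ (x : Fin n → Bool) (d : Bool),
      F j (update x (ρ j) (x (ρ j) ^^ d)) = (F j x ^^ d)) :
    IsControlSet F Wᶜ := by
  refine isControlSet_of_twoSteps fun x0 xT => ?_
  set c : Fin n → Bool := fun p => F p x0
  set x1 : Fin n → Bool := fun p => c p ^^ decide (∃ j ∈ W, ρ j = p ∧ F j c ≠ xT j)
  have hx1W : ∀ i ∈ W, x1 i = c i := fun i hi => by
    have : ¬∃ j ∈ W, ρ j = i ∧ F j c ≠ xT j := by
      rintro ⟨j, hj, rfl, -⟩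
      exact (hρ j hj).2.1 hi
    simp [x1, this]
  have hx1S : ∀ i ∈ W, ∀ q ∈ S i,
      x1 q = update c (ρ i) (c (ρ i) ^^ decide (F i c ≠ xT i)) q := by
    intro i hi q hq
    have hpriv : (∃ j ∈ W, ρ j = q ∧ F j c ≠ xT j) ↔ q = ρ i ∧ F i c ≠ xT i := by
      constructor
      · rintro ⟨j, hj, rfl, hne⟩
        obtain rfl := hρ.eq_of_mem hi hj hq
        exact ⟨rfl, hne⟩
      · rintro ⟨rfl, hne⟩
        exact ⟨i, hi, rfl, hne⟩
    by_cases hqi : q = ρ i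
    · subst hqi
      simp [x1, hpriv]
    · simp [x1, hpriv, hqi]
  refine ⟨x1, fun i hi => hx1W i (by simpa using hi), fun i hi => ?_⟩
  have hi : i ∈ W := by simpa using hi
  rw [hcongr i hi _ _ (hx1S i hi), hflip i hi]
  cases F i c <;> cases xT i <;> simp

end Control

theorem pred_mul_mul_le (k m : ℕ) :
    (k - 1) * m * (k * (2 * k - 1)) ≤ (k - 1) * ((k * (k - 1) + 1) * (k * m)) := by
  rcases k with _ | k
  · simp
  · rw [show 2 * (k + 1) - 1 = 2 * k + 1 by omega, Nat.add_sub_cancel]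
    calc k * m * ((k + 1) * (2 * k + 1)) = k * m * (k + 1) * (2 * k + 1) := by ring
      _ ≤ k * m * (k + 1) * ((k + 1) * k + 1) :=
        Nat.mul_le_mul_left _ (by nlinarith [Nat.le_mul_self k])
      _ = k * (((k + 1) * k + 1) * ((k + 1) * m)) := by ring

theorem cast_sub_pred_mul_eq {k m n : ℕ} (hk : 0 < k) (hn : n = (k * (k - 1) + 1) * (k * m)) :
    ((n - (k - 1) * m : ℕ) : ℚ) =
      (1 - ((k : ℚ) - 1) / ((k : ℚ) * ((k : ℚ) ^ 2 - (k : ℚ) + 1))) * n := by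
  subst hn
  have hle : (k - 1) * m ≤ (k * (k - 1) + 1) * (k * m) :=
    Nat.mul_le_mul (by nlinarith) (Nat.le_mul_of_pos_left m hk)
  have hk0 : (k : ℚ) ≠ 0 := by positivity
  have hq : (k : ℚ) * (k - 1) + 1 ≠ 0 := by nlinarith [sq_nonneg ((k : ℚ) - 1)]
  push_cast [Nat.cast_sub hle, Nat.cast_sub hk]
  field_simp

theorem stmt8_general (k m n : ℕ) (hk : 2 ≤ k) (hkm : k ∣ m)
    (hn : n = (k * (k - 1) + 1) * m)
    (F : Fin n → (Fin n → Bool) → Bool) (hF : IsKKXorBN k F) :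
    ∃ U : Finset (Fin n), IsControlSet F U ∧
      (U.card : ℚ) ≤ (1 - ((k : ℚ) - 1) / ((k : ℚ) * ((k : ℚ) ^ 2 - (k : ℚ) + 1))) * n := by
  obtain ⟨m, rfl⟩ := hkm
  obtain ⟨hXor, hDeg⟩ := hF
  choose S hScard hS using hXor
  replace hS : ∀ j, IsParity (S j) (F j) := hS
  have hout : ∀ u, #{j | u ∈ S j} = k := fun u => by
    rw [← (hDeg u).2, outSet_eq_of_isParity hS, Set.ncard_coe_finset]
  obtain ⟨W, ρ, hWcard, hρ⟩ := exists_privateInputs (by omega) hScard (fun u => (hout u).le)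
    (by rw [Fintype.card_fin, hn]; exact pred_mul_mul_le k m)
  refine ⟨Wᶜ, isControlSet_compl_of_privateInputs hρ (fun j _ _ _ => (hS j).congr)
    fun j hj => (hS j).update_xor (hρ j hj).1, ?_⟩
  rw [card_compl, hWcard, Fintype.card_fin, cast_sub_pred_mul_eq (by omega) hn]

/-- Let `k ≥ 2` and `n = (k(k−1)+1)·m` with `m > 0`, `k ∣ m`. Then every
`k`-`k`-XOR-BN on `n` nodes has a control node set of size at most
`(1 − (k−1)/(k(k²−k+1)))·n`. -/
theorem stmt8 (k m n : ℕ) (hk : 2 ≤ k) (hm : 0 < m) (hkm : k ∣ m)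
    (hn : n = (k * (k - 1) + 1) * m)
    (F : Fin n → (Fin n → Bool) → Bool) (hF : IsKKXorBN k F) :
    ∃ U : Finset (Fin n), IsControlSet F U ∧
      (U.card : ℚ) ≤ (1 - ((k : ℚ) - 1) / ((k : ℚ) * ((k : ℚ) ^ 2 - (k : ℚ) + 1))) * n :=
  stmt8_general k m n hk hkm hn F hF

end BN
end

section
/- For every n = 2m with m a positive integer, there exists a simple 2-2-AND-BN on n nodes for which the size of the minimum control node set is n (i.e., every node must be a control node). -/
/-!
Pair the nodes as `{2k, 2k + 1}` and let each node be the AND of itself and its partner; then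
every node has its pair as both in- and out-neighbourhood. An uncontrolled node with such a
self-loop, once `false`, stays `false` forever, so the all-`false` state can be driven to the
all-`true` state only if every node is controlled.
-/

namespace BN

variable {n : ℕ}

/-- AND of the inputs in `S` (no negations). -/
def andFun (S : Finset (Fin n)) (x : Fin n → Bool) : Bool :=
  decide (∀ j ∈ S, x j = true)

/-- `f` is the conjunction of `k` distinct inputs (no negations). -/
def IsSimpleKAnd (k : ℕ) (f : (Fin n → Bool) → Bool) : Prop :=
  ∃ S : Finset (Fin n), S.card = k ∧ f = andFun S

/-- A simple `k`-`k`-AND-BN: each function is a `k`-input AND (no negations) and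
every node has indegree `k` and outdegree `k`. -/
def IsSimpleKKAndBN (k : ℕ) (F : Fin n → (Fin n → Bool) → Bool) : Prop :=
  (∀ i, IsSimpleKAnd k (F i)) ∧ ∀ i, (inSet F i).ncard = k ∧ (outSet F i).ncard = k

lemma andFun_update_of_notMem {S : Finset (Fin n)} {j : Fin n} (hj : j ∉ S)
    (x : Fin n → Bool) (b : Bool) : andFun S (Function.update x j b) = andFun S x := by
  simp only [andFun, decide_eq_decide]
  refine forall₂_congr fun k hk => ?_
  rw [Function.update_of_ne (ne_of_mem_of_not_mem hk hj)]

lemma andFun_eq_false_of_mem {S : Finset (Fin n)} {j : Fin n} (hj : j ∈ S)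
    {x : Fin n → Bool} (hx : x j = false) : andFun S x = false := by
  simp only [andFun, decide_eq_false_iff_not, not_forall]
  exact ⟨j, hj, by simp [hx]⟩

lemma depends_andFun_iff (S : Finset (Fin n)) (j : Fin n) :
    Depends (andFun S) j ↔ j ∈ S := by
  constructor
  · rintro ⟨x, hx⟩
    by_contra hj
    exact hx (andFun_update_of_notMem hj x _)
  · intro hj
    refine ⟨fun _ => true, ?_⟩
    rw [andFun_eq_false_of_mem hj (by simp)]
    simp [andFun]

lemma inSet_andFun (S : Fin n → Finset (Fin n)) (i : Fin n) :
    inSet (fun j => andFun (S j)) i = S i := by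
  ext j
  simp [inSet, depends_andFun_iff]

lemma outSet_andFun (S : Fin n → Finset (Fin n)) (i : Fin n) :
    outSet (fun j => andFun (S j)) i = {j | i ∈ S j} := by
  ext j
  simp [outSet, depends_andFun_iff]

lemma isControlSet_univ (F : Fin n → (Fin n → Bool) → Bool) : IsControlSet F Finset.univ := by
  intro x0 xT
  refine ⟨1, le_rfl, fun _ i => Bool.xor (xT i) (F i x0), ?_⟩
  funext i
  simp [traj]

lemma traj_apply_eq_false {F : Fin n → (Fin n → Bool) → Bool} {U : Finset (Fin n)} {i : Fin n}
    (hi : i ∉ U) (hF : ∀ x, x i = false → F i x = false) (u : ℕ → Fin n → Bool)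
    {x0 : Fin n → Bool} (hx0 : x0 i = false) (t : ℕ) : traj F U u x0 t i = false := by
  induction t with
  | zero => exact hx0
  | succ t ih => simpa [traj, hi] using hF _ ih

lemma mem_of_isControlSet {F : Fin n → (Fin n → Bool) → Bool} {U : Finset (Fin n)}
    (hU : IsControlSet F U) {i : Fin n} (hF : ∀ x, x i = false → F i x = false) : i ∈ U := by
  by_contra hi
  obtain ⟨t, -, u, hu⟩ := hU (fun _ => false) (fun _ => true)
  simpa using (congrFun hu i).symm.trans (traj_apply_eq_false hi hF u rfl t)

def pairAndNet (σ : Fin n → Fin n) : Fin n → (Fin n → Bool) → Bool :=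
  fun i => andFun {i, σ i}

lemma isSimpleKKAndBN_pairAndNet {σ : Fin n → Fin n} (hσ : Function.Involutive σ)
    (hfix : ∀ i, σ i ≠ i) : IsSimpleKKAndBN 2 (pairAndNet σ) := by
  have hcard : ∀ i, ({i, σ i} : Set (Fin n)).ncard = 2 := fun i =>
    Set.ncard_pair (hfix i).symm
  refine ⟨fun i => ⟨{i, σ i}, Finset.card_pair (hfix i).symm, rfl⟩, fun i => ⟨?_, ?_⟩⟩
  · rw [show inSet (pairAndNet σ) i = _ from inSet_andFun (fun j => {j, σ j}) i,
      Finset.coe_pair, hcard]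
  · convert hcard i using 2
    rw [show outSet (pairAndNet σ) i = _ from outSet_andFun (fun j => {j, σ j}) i]
    ext j
    simp only [Finset.mem_insert, Finset.mem_singleton, Set.mem_ofPred_eq, Set.mem_insert_iff,
      Set.mem_singleton_iff]
    exact or_congr eq_comm (by rw [eq_comm, hσ.eq_iff])

lemma mem_of_isControlSet_pairAndNet {σ : Fin n → Fin n} {U : Finset (Fin n)}
    (hU : IsControlSet (pairAndNet σ) U) (i : Fin n) : i ∈ U :=
  mem_of_isControlSet hU fun _ hx => andFun_eq_false_of_mem (Finset.mem_insert_self _ _) hx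

def pairSwap {m : ℕ} (i : Fin (2 * m)) : Fin (2 * m) :=
  ⟨if i.val % 2 = 0 then i.val + 1 else i.val - 1, by split_ifs <;> omega⟩

lemma pairSwap_involutive (m : ℕ) : Function.Involutive (@pairSwap m) := by
  intro i
  ext
  simp only [pairSwap]
  split_ifs <;> omega

lemma pairSwap_ne (m : ℕ) (i : Fin (2 * m)) : pairSwap i ≠ i := by
  intro h
  have := congrArg Fin.val h
  simp only [pairSwap] at this
  split_ifs at this <;> omega

theorem stmt9_general (m : ℕ) :
    ∃ F : Fin (2 * m) → (Fin (2 * m) → Bool) → Bool, IsSimpleKKAndBN 2 F ∧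
      (∃ U : Finset (Fin (2 * m)), IsControlSet F U ∧ U.card = 2 * m) ∧
      ∀ U : Finset (Fin (2 * m)), IsControlSet F U → 2 * m ≤ U.card := by
  refine ⟨pairAndNet pairSwap,
    isSimpleKKAndBN_pairAndNet (pairSwap_involutive m) (pairSwap_ne m),
    ⟨Finset.univ, isControlSet_univ _, by simp⟩, fun U hU => ?_⟩
  have hU_univ : U = Finset.univ := Finset.eq_univ_of_forall (mem_of_isControlSet_pairAndNet hU)
  simp [hU_univ]

/-- For every `n = 2m` with `m ≥ 1`, there exists a simple 2-2-AND-BN on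
`n` nodes whose minimum control node set has size `n` (all nodes must be controlled). -/
theorem stmt9 (m : ℕ) (hm : 0 < m) :
    ∃ F : Fin (2 * m) → (Fin (2 * m) → Bool) → Bool, IsSimpleKKAndBN 2 F ∧
      (∃ U : Finset (Fin (2 * m)), IsControlSet F U ∧ U.card = 2 * m) ∧
      ∀ U : Finset (Fin (2 * m)), IsControlSet F U → 2 * m ≤ U.card :=
  stmt9_general m

end BN
end

section
/- For every integer k ≥ 2 and every simple k-k-AND-BN on n nodes, every control node set U satisfies |U| ≥ ((k−1)/(2k−1))·n. -/
namespace BN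

variable {n : ℕ}

lemma andFun_eq_true {S : Finset (Fin n)} {y : Fin n → Bool} :
    andFun S y = true ↔ ∀ j ∈ S, y j = true := by
  simp [andFun]

lemma andFun_eq_false {S : Finset (Fin n)} {y : Fin n → Bool} :
    andFun S y = false ↔ ∃ j ∈ S, y j = false := by
  simp [andFun]

lemma depends_andFun {S : Finset (Fin n)} {j : Fin n} :
    Depends (andFun S) j ↔ j ∈ S := by
  constructor
  · rintro ⟨x, hx⟩
    by_contra hj
    apply hx
    have hupd : ∀ j' ∈ S, Function.update x j (!(x j)) j' = x j' := fun j' hj' =>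
      Function.update_of_ne (fun h => hj (by rwa [h] at hj')) _ _
    simp only [andFun, decide_eq_decide]
    exact ⟨fun h j' hj' => by rw [← hupd j' hj']; exact h j' hj',
           fun h j' hj' => by rw [hupd j' hj']; exact h j' hj'⟩
  · intro hj
    refine ⟨fun _ => true, ?_⟩
    have h1 : andFun S (fun _ => true) = true := by simp [andFun]
    have h2 : andFun S (Function.update (fun _ => true) j (!(true))) = false := by
      rw [andFun_eq_false]
      exact ⟨j, hj, by simp⟩
    rw [h1, h2]
    exact Bool.false_ne_true

/-- For every `k ≥ 2` and every simple `k`-`k`-AND-BN on `n` nodes, every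
control node set `U` satisfies `|U| ≥ ((k−1)/(2k−1))·n`. -/
theorem stmt14 (n k : ℕ) (hk : 2 ≤ k)
    (F : Fin n → (Fin n → Bool) → Bool) (hF : IsSimpleKKAndBN k F)
    (U : Finset (Fin n)) (hU : IsControlSet F U) :
    ((k : ℚ) - 1) / (2 * (k : ℚ) - 1) * n ≤ U.card := by
  classical
  obtain ⟨hAnd, hDeg⟩ := hF
  choose S hScard hSfun using hAnd
  -- outdegree of every node is k, as a Finset statement
  have hout : ∀ q : Fin n, (Finset.univ.filter fun i => q ∈ S i).card = k := by
    intro q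
    have h := (hDeg q).2
    have he : outSet F q = ↑(Finset.univ.filter fun i => q ∈ S i) := by
      ext i
      simp only [outSet, Set.mem_setOf_eq, Finset.coe_filter, Finset.mem_univ, true_and,
        Set.mem_setOf_eq, hSfun i, depends_andFun]
    rw [he, Set.ncard_coe_finset] at h
    exact h
  -- every non-controlled node has a private input
  have key : ∀ i, ∃ p : Fin n, i ∉ U →
      p ∈ S i ∧ ∀ i', i' ∉ U → i' ≠ i → p ∉ S i' := by
    intro i
    by_cases hi : i ∈ U
    · exact ⟨i, fun h => absurd hi h⟩
    · obtain ⟨t, ht1, u, hu⟩ := hU (fun _ => true) (fun i' => decide (i' ≠ i))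
      obtain ⟨s, rfl⟩ := Nat.exists_eq_add_of_le' ht1
      set y := traj F U u (fun _ => true) s with hy
      have hstep : ∀ i', i' ∉ U → F i' y = decide (i' ≠ i) := by
        intro i' hi'
        have h := congrFun hu i'
        simp only [traj] at h
        rw [if_neg hi'] at h
        exact h
      have hFi : F i y = false := by simpa using hstep i hi
      rw [hSfun, andFun_eq_false] at hFi
      obtain ⟨p, hpS, hpy⟩ := hFi
      refine ⟨p, fun _ => ⟨hpS, ?_⟩⟩
      intro i' hi' hne hpS'
      have hFi' : F i' y = true := by simpa [hne] using hstep i' hi'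
      rw [hSfun, andFun_eq_true] at hFi'
      rw [hFi' p hpS'] at hpy
      exact absurd hpy (by simp)
  choose p hp using key
  set V : Finset (Fin n) := Finset.univ \ U with hV
  have hmemV : ∀ i, i ∈ V ↔ i ∉ U := by intro i; simp [hV]
  -- p is injective on V
  have hinj : Set.InjOn p ↑V := by
    intro i1 h1 i2 h2 heq
    by_contra hne
    have hp1 := hp i1 ((hmemV i1).1 h1)
    have hp2 := hp i2 ((hmemV i2).1 h2)
    exact hp2.2 i1 ((hmemV i1).1 h1) hne (heq ▸ hp1.1)
  set P : Finset (Fin n) := V.image p with hP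
  -- each private input sends at least k-1 edges into U
  have hlow : ∀ q ∈ P, k - 1 ≤ (U.filter fun i => q ∈ S i).card := by
    intro q hq
    obtain ⟨i, hiV, rfl⟩ := Finset.mem_image.1 hq
    have hiU := (hmemV i).1 hiV
    have hsub : (Finset.univ.filter fun i' => p i ∈ S i')
        ⊆ insert i (U.filter fun i' => p i ∈ S i') := by
      intro i' hi'
      simp only [Finset.mem_filter, Finset.mem_univ, true_and] at hi'
      by_cases h : i' ∈ U
      · exact Finset.mem_insert_of_mem (Finset.mem_filter.2 ⟨h, hi'⟩)
      · by_cases he : i' = i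
        · subst he; exact Finset.mem_insert_self _ _
        · exact absurd hi' ((hp i hiU).2 i' h he)
    have h1 := Finset.card_le_card hsub
    rw [hout (p i)] at h1
    have h2 := h1.trans (Finset.card_insert_le _ _)
    omega
  -- double counting
  have hsum : ∑ q ∈ P, (U.filter fun i => q ∈ S i).card
      = ∑ i ∈ U, (P.filter fun q => q ∈ S i).card := by
    simp only [Finset.card_filter]
    rw [Finset.sum_comm]
  have hlower : (k - 1) * P.card ≤ ∑ q ∈ P, (U.filter fun i => q ∈ S i).card := by
    calc (k - 1) * P.card = ∑ _q ∈ P, (k - 1) := by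
          rw [Finset.sum_const, smul_eq_mul, mul_comm]
      _ ≤ _ := Finset.sum_le_sum hlow
  have hupper : ∑ i ∈ U, (P.filter fun q => q ∈ S i).card ≤ k * U.card := by
    calc ∑ i ∈ U, (P.filter fun q => q ∈ S i).card
        ≤ ∑ i ∈ U, (S i).card :=
          Finset.sum_le_sum fun i _ =>
            Finset.card_le_card (fun q hq => (Finset.mem_filter.1 hq).2)
      _ = k * U.card := by
          simp only [hScard, Finset.sum_const, smul_eq_mul]; rw [mul_comm]
  have hPcard : P.card = n - U.card := by
    rw [hP, Finset.card_image_of_injOn hinj, hV,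
      Finset.card_sdiff_of_subset (Finset.subset_univ U), Finset.card_univ, Fintype.card_fin]
  have hUn : U.card ≤ n := by
    have := Finset.card_le_card (Finset.subset_univ U)
    simpa using this
  have hmain : (k - 1) * (n - U.card) ≤ k * U.card := by
    rw [← hPcard]
    exact hlower.trans (hsum ▸ hupper)
  have hfin : (k - 1) * n ≤ (2 * k - 1) * U.card := by
    calc (k - 1) * n = (k - 1) * (n - U.card) + (k - 1) * U.card := by
          rw [← Nat.mul_add, Nat.sub_add_cancel hUn]
      _ ≤ k * U.card + (k - 1) * U.card := Nat.add_le_add_right hmain _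
      _ = (k + (k - 1)) * U.card := (Nat.add_mul _ _ _).symm
      _ = (2 * k - 1) * U.card := by congr 1; omega
  have hk2 : (0 : ℚ) < 2 * (k : ℚ) - 1 := by
    have : (2 : ℚ) ≤ (k : ℚ) := by exact_mod_cast hk
    linarith
  rw [div_mul_eq_mul_div, div_le_iff₀ hk2]
  have hq := (Nat.cast_le (α := ℚ)).2 hfin
  rw [Nat.cast_mul, Nat.cast_mul, Nat.cast_sub (by omega : 1 ≤ k),
    Nat.cast_sub (by omega : 1 ≤ 2 * k)] at hq
  push_cast at hq
  linarith

end BN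
end

section
/- For every 2-2-AND-BN with negation on n nodes, every control node set U satisfies |U| ≥ max(n/3, |M_1|/2), where M_1 is the set of nodes x_i such that both the literal x_i and the literal ¬x_i appear among the update functions of the network. -/
namespace BN

variable {n : ℕ}

/-- A `k`-`k`-AND-BN with negation: node `i` is updated by the conjunction of literals
over the `k` distinct variables in `S i` with signs `sign i` (`true` = positive literal),
and every node occurs as an input to exactly `k` functions (outdegree `k`). -/
structure AndNegBN (n k : ℕ) where
  S : Fin n → Finset (Fin n)
  sign : Fin n → Fin n → Bool
  card_S : ∀ i, (S i).card = k
  outdeg : ∀ j : Fin n, (Finset.univ.filter fun i => j ∈ S i).card = k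

namespace AndNegBN

variable {k : ℕ}

/-- The update functions of the network. -/
def F (B : AndNegBN n k) : Fin n → (Fin n → Bool) → Bool :=
  fun i x => decide (∀ j ∈ B.S i, x j = B.sign i j)

/-- Number of occurrences of the positive literal `x i` among the update functions. -/
def posCount (B : AndNegBN n k) (i : Fin n) : ℕ :=
  (Finset.univ.filter fun l => i ∈ B.S l ∧ B.sign l i = true).card

/-- Number of occurrences of the negative literal `¬ x i` among the update functions. -/
def negCount (B : AndNegBN n k) (i : Fin n) : ℕ :=
  (Finset.univ.filter fun l => i ∈ B.S l ∧ B.sign l i = false).card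

/-- `M j`: the set of nodes `i` such that one of the literals `x i`, `¬ x i` appears
exactly `j` times and the other exactly `k - j` times. -/
def M (B : AndNegBN n k) (j : ℕ) : Finset (Fin n) :=
  Finset.univ.filter fun i =>
    (B.posCount i = j ∧ B.negCount i = k - j) ∨ (B.posCount i = k - j ∧ B.negCount i = j)

/-- The out-neighbors of node `i`: the nodes whose update function uses `i`. -/
def outNbrs (B : AndNegBN n k) (i : Fin n) : Finset (Fin n) :=
  Finset.univ.filter fun l => i ∈ B.S l

end AndNegBN

lemma F_eq_true {k : ℕ} (B : AndNegBN n k) (i : Fin n) (y : Fin n → Bool) :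
    B.F i y = true ↔ ∀ j ∈ B.S i, y j = B.sign i j := by
  simp [AndNegBN.F]

/-- One-step surjectivity: a control set can realize any pattern on uncontrolled nodes. -/
lemma oneStep {k : ℕ} (B : AndNegBN n k) {U : Finset (Fin n)}
    (hU : IsControlSet B.F U) (b : Fin n → Bool) :
    ∃ y : Fin n → Bool, ∀ i, i ∉ U → B.F i y = b i := by
  obtain ⟨t, ht, u, h⟩ := hU b b
  obtain ⟨s, rfl⟩ : ∃ s, t = s + 1 := ⟨t - 1, by omega⟩
  refine ⟨traj B.F U u b s, fun i hi => ?_⟩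
  have hh := congrFun h i
  simpa [traj, hi] using hh

/-- Every `M 1` node has an out-neighbor in `U`. -/
lemma M1_out (B : AndNegBN n 2) {U : Finset (Fin n)} (hU : IsControlSet B.F U) :
    ∀ p : Fin n, ∃ o : Fin n, p ∈ B.M 1 → o ∈ U ∧ p ∈ B.S o := by
  intro p
  by_cases hp : p ∈ B.M 1
  · have hpn : B.posCount p = 1 ∧ B.negCount p = 1 := by
      have h := (Finset.mem_filter.mp hp).2
      rcases h with h | h <;> exact ⟨h.1, by simpa using h.2⟩
    have e1 : (Finset.univ.filter fun l => p ∈ B.S l ∧ B.sign l p = true).card = 1 := hpn.1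
    have e2 : (Finset.univ.filter fun l => p ∈ B.S l ∧ B.sign l p = false).card = 1 := hpn.2
    obtain ⟨l1, hl1⟩ := Finset.card_pos.mp (by rw [e1]; norm_num)
    obtain ⟨l2, hl2⟩ := Finset.card_pos.mp (by rw [e2]; norm_num)
    obtain ⟨hl1S, hl1s⟩ := (Finset.mem_filter.mp hl1).2
    obtain ⟨hl2S, hl2s⟩ := (Finset.mem_filter.mp hl2).2
    by_cases h1 : l1 ∈ U
    · exact ⟨l1, fun _ => ⟨h1, hl1S⟩⟩
    by_cases h2 : l2 ∈ U
    · exact ⟨l2, fun _ => ⟨h2, hl2S⟩⟩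
    exfalso
    obtain ⟨y, hy⟩ := oneStep B hU (fun _ => true)
    have hy1 := (F_eq_true B l1 y).mp (hy l1 h1) p hl1S
    have hy2 := (F_eq_true B l2 y).mp (hy l2 h2) p hl2S
    rw [hl1s] at hy1; rw [hl2s] at hy2
    simp [hy1] at hy2
  · exact ⟨p, fun h => absurd h hp⟩

/-- Every uncontrolled node has an input whose other out-neighbor is in `U`. -/
lemma cover (B : AndNegBN n 2) {U : Finset (Fin n)} (hU : IsControlSet B.F U) :
    ∀ w : Fin n, ∃ p : Fin n × Fin n, w ∉ U →
      p.1 ∈ U ∧ p.1 ≠ w ∧ p.2 ∈ B.S w ∧ p.2 ∈ B.S p.1 := by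
  intro w
  by_cases hw : w ∈ U
  · exact ⟨(w, w), fun h => absurd hw h⟩
  obtain ⟨j1, j2, hj12, hS⟩ := Finset.card_eq_two.mp (B.card_S w)
  have hj1 : j1 ∈ B.S w := by rw [hS]; simp
  have hj2 : j2 ∈ B.S w := by rw [hS]; simp
  have hpart : ∀ jj ∈ B.S w, ∃ o, o ≠ w ∧ jj ∈ B.S o := by
    intro jj hjj
    have hcard : 1 < (Finset.univ.filter fun l => jj ∈ B.S l).card := by
      rw [B.outdeg jj]; norm_num
    obtain ⟨o, ho, hne⟩ := Finset.exists_mem_ne hcard w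
    exact ⟨o, hne, (Finset.mem_filter.mp ho).2⟩
  obtain ⟨o1, ho1w, ho1⟩ := hpart j1 hj1
  obtain ⟨o2, ho2w, ho2⟩ := hpart j2 hj2
  by_cases h1U : o1 ∈ U
  · exact ⟨(o1, j1), fun _ => ⟨h1U, ho1w, hj1, ho1⟩⟩
  by_cases h2U : o2 ∈ U
  · exact ⟨(o2, j2), fun _ => ⟨h2U, ho2w, hj2, ho2⟩⟩
  exfalso
  have hsg : ∀ (jj o : Fin n), jj ∈ B.S w → jj ∈ B.S o → o ∉ U → B.sign o jj = B.sign w jj := by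
    intro jj o hjw hjo hoU
    by_contra hne
    obtain ⟨y, hy⟩ := oneStep B hU (fun _ => true)
    have h1 := (F_eq_true B w y).mp (hy w hw) jj hjw
    have h2 := (F_eq_true B o y).mp (hy o hoU) jj hjo
    exact hne ((h2.symm).trans h1)
  have hs1 : B.sign o1 j1 = B.sign w j1 := hsg j1 o1 hj1 ho1 h1U
  have hs2 : B.sign o2 j2 = B.sign w j2 := hsg j2 o2 hj2 ho2 h2U
  obtain ⟨y, hy⟩ := oneStep B hU (fun i => decide (i ≠ w))
  have hyw : B.F w y = false := by
    have := hy w hw; simpa using this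
  have hy1 : B.F o1 y = true := by
    have := hy o1 h1U; simpa [ho1w] using this
  have hy2 : B.F o2 y = true := by
    have := hy o2 h2U; simpa [ho2w] using this
  have hv1 : y j1 = B.sign w j1 := ((F_eq_true B o1 y).mp hy1 j1 ho1).trans hs1
  have hv2 : y j2 = B.sign w j2 := ((F_eq_true B o2 y).mp hy2 j2 ho2).trans hs2
  have : B.F w y = true := by
    rw [F_eq_true]
    intro j hj
    rw [hS] at hj
    rcases Finset.mem_insert.mp hj with rfl | hj
    · exact hv1
    · rw [Finset.mem_singleton.mp hj]; exact hv2
  rw [this] at hyw; exact absurd hyw (by simp)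

/-- For every 2-2-AND-BN with negation on `n` nodes, every control node
set `U` satisfies `|U| ≥ max(n/3, |M₁|/2)`. -/
theorem stmt15 (n : ℕ) (B : AndNegBN n 2) (U : Finset (Fin n))
    (hU : IsControlSet B.F U) :
    max ((n : ℚ) / 3) (((B.M 1).card : ℚ) / 2) ≤ U.card := by
  classical
  choose f hf using cover B hU
  choose g hg using M1_out B hU
  set T : Finset (Fin n × Fin n) := U.biUnion (fun o => (B.S o).image (fun j => (o, j))) with hT
  have hTcard : T.card ≤ 2 * U.card := by
    refine le_trans Finset.card_biUnion_le ?_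
    calc ∑ o ∈ U, ((B.S o).image (fun j => (o, j))).card
        ≤ ∑ o ∈ U, 2 :=
          Finset.sum_le_sum fun o _ => le_trans Finset.card_image_le (le_of_eq (B.card_S o))
      _ = 2 * U.card := by rw [Finset.sum_const, smul_eq_mul, mul_comm]
  have hW : (Finset.univ \ U).card ≤ T.card := by
    apply Finset.card_le_card_of_injOn f
    · intro w hw
      obtain ⟨h1, h2, h3, h4⟩ := hf w (Finset.mem_sdiff.mp hw).2
      exact Finset.mem_biUnion.mpr ⟨(f w).1, h1, Finset.mem_image.mpr ⟨(f w).2, h4, rfl⟩⟩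
    · intro w1 hw1 w2 hw2 heq
      by_contra hne
      obtain ⟨o1U, o1ne, j1w, j1o⟩ := hf w1 (Finset.mem_sdiff.mp hw1).2
      obtain ⟨o2U, o2ne, j2w, j2o⟩ := hf w2 (Finset.mem_sdiff.mp hw2).2
      have ho : (f w1).1 = (f w2).1 := by rw [heq]
      have hj : (f w1).2 = (f w2).2 := by rw [heq]
      have hsub : ({w1, w2, (f w1).1} : Finset (Fin n)) ⊆
          Finset.univ.filter (fun l => (f w1).2 ∈ B.S l) := by
        intro x hx
        simp only [Finset.mem_insert, Finset.mem_singleton] at hx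
        rcases hx with rfl | rfl | rfl
        · exact Finset.mem_filter.mpr ⟨Finset.mem_univ _, j1w⟩
        · exact Finset.mem_filter.mpr ⟨Finset.mem_univ _, by rw [hj]; exact j2w⟩
        · exact Finset.mem_filter.mpr ⟨Finset.mem_univ _, j1o⟩
      have hc := Finset.card_le_card hsub
      rw [B.outdeg (f w1).2] at hc
      have h3 : ({w1, w2, (f w1).1} : Finset (Fin n)).card = 3 := by
        rw [Finset.card_insert_of_notMem, Finset.card_insert_of_notMem,
            Finset.card_singleton]
        · simp only [Finset.mem_singleton]
          exact fun h => o2ne (by rw [← ho, h])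
        · simp only [Finset.mem_insert, Finset.mem_singleton]
          push_neg
          exact ⟨hne, fun h => o1ne h.symm⟩
      omega
  have hM : (B.M 1).card ≤ T.card := by
    apply Finset.card_le_card_of_injOn (fun p => (g p, p))
    · intro p hp
      obtain ⟨hgU, hgS⟩ := hg p hp
      exact Finset.mem_biUnion.mpr ⟨g p, hgU, Finset.mem_image.mpr ⟨p, hgS, rfl⟩⟩
    · intro p1 _ p2 _ h
      simpa using congrArg Prod.snd h
  have hUn : U.card ≤ n := by
    have := Finset.card_le_card (Finset.subset_univ U)
    simpa using this
  have hWc : (Finset.univ \ U).card = n - U.card := by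
    rw [Finset.card_sdiff_of_subset (Finset.subset_univ U), Finset.card_univ]
    simp
  have hn3 : n ≤ 3 * U.card := by omega
  have hM2 : (B.M 1).card ≤ 2 * U.card := le_trans hM hTcard
  apply max_le
  · rw [div_le_iff₀ (by norm_num : (0:ℚ) < 3)]
    have := (Nat.cast_le (α := ℚ)).mpr hn3
    push_cast at this
    linarith
  · rw [div_le_iff₀ (by norm_num : (0:ℚ) < 2)]
    have := (Nat.cast_le (α := ℚ)).mpr hM2
    push_cast at this
    linarith

end BN
end

section
/- Let k ≥ 2 and let N be a k-k-AND-BN with negation on n nodes. Then every control node set U satisfies |U| ≥ max over l = 1, 2, …, ⌊k/2⌋+1 of [ ((k−l)/(2k−l))·n + (1/(2k−l))·Σ_{j=1}^{l−2} j·|M_j| + ((l−1)/(2k−l))·Σ_{j=l−1}^{⌊k/2⌋} |M_j| ], where empty sums (sums whose lower index exceeds the upper index) are 0. -/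
/-!
Let `W` be the complement of `U`. Since a target is reached through a last step, every
assignment of values to the nodes of `W` is `(f_i(z))_{i ∈ W}` for some state `z`. Driving all of
`W` to `1` shows that a variable read by two nodes of `W` carries the same sign in both; switching
off a single `i ∈ W` while keeping the rest of `W` on then gives `i` a private input, read by no
other node of `W`.

Let `a_j` be the number of nodes of `W` reading `x_j` and `m_j = min(#x_j, #¬x_j)`, so that
`x_j ∈ M_{m_j}`. Sign consistency gives `a_j + m_j ≤ k`; private inputs have `a_j = 1` and there
are at least `|W|` of them; and `∑ a_j = k |W|`. Summing `min(m_j, l - 1) + a_j ≤ l` over private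
inputs and `≤ k` over the other nodes gives `(k - l) n + ∑ min(m_j, l - 1) ≤ (2k - l) |U|`, and
`∑ min(m_j, l - 1)` is the weighted sum of the `|M_j|` in the bound.
-/

namespace BN

variable {n : ℕ}

open Finset

theorem IsControlSet.exists_forall_notMem_eq {F : Fin n → (Fin n → Bool) → Bool}
    {U : Finset (Fin n)} (hU : IsControlSet F U) (v : Fin n → Bool) :
    ∃ z, ∀ i ∉ U, F i z = v i := by
  obtain ⟨t, ht, u, hu⟩ := hU v v
  obtain ⟨s, rfl⟩ : ∃ s, t = s + 1 := ⟨t - 1, by omega⟩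
  exact ⟨traj F U u v s, fun i hi => by simpa [traj, hi] using congrFun hu i⟩

namespace AndNegBN

variable {k : ℕ} (B : AndNegBN n k)

def outdegIn (W : Finset (Fin n)) (j : Fin n) : ℕ := #{i ∈ W | j ∈ B.S i}

def minCount (i : Fin n) : ℕ := min (B.posCount i) (B.negCount i)

theorem F_eq_true_iff (i : Fin n) (z : Fin n → Bool) :
    B.F i z = true ↔ ∀ j ∈ B.S i, z j = B.sign i j := by
  simp [F]

theorem posCount_add_negCount (i : Fin n) : B.posCount i + B.negCount i = k := by
  have := card_filter_add_card_filter_not (s := {l | i ∈ B.S l}) (p := fun l => B.sign l i = true)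
  rw [posCount, negCount]
  simpa only [filter_filter, Bool.not_eq_true, B.outdeg i] using this

theorem minCount_le_half (i : Fin n) : B.minCount i ≤ k / 2 := by
  have := B.posCount_add_negCount i
  rw [minCount]
  omega

theorem M_eq_filter_minCount {j : ℕ} (hj : j ≤ k / 2) :
    B.M j = ({i | B.minCount i = j} : Finset (Fin n)) := by
  ext i
  have := B.posCount_add_negCount i
  rw [M, mem_filter_univ, mem_filter_univ, minCount]
  omega

theorem sum_outdegIn (W : Finset (Fin n)) : ∑ j, B.outdegIn W j = k * #W := by
  have := sum_card_bipartiteAbove_eq_sum_card_bipartiteBelow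
    (s := univ) (t := W) (r := fun j i => j ∈ B.S i)
  simp only [bipartiteAbove, bipartiteBelow, filter_univ_mem, B.card_S, sum_const,
    smul_eq_mul] at this
  unfold outdegIn
  rw [this, mul_comm]

theorem sum_min_minCount_eq (c : ℕ) :
    ∑ i, min (B.minCount i) c = ∑ j ∈ range (k / 2 + 1), min j c * #(B.M j) := by
  rw [← sum_fiberwise_of_maps_to (g := B.minCount) (t := range (k / 2 + 1))
    fun i _ => mem_range_succ_iff.2 (B.minCount_le_half i)]
  refine sum_congr rfl fun j hj => ?_
  rw [B.M_eq_filter_minCount (mem_range_succ_iff.1 hj), sum_congr rfl fun i hi =>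
    congrArg (min · c) (mem_filter.1 hi).2, sum_const, smul_eq_mul, mul_comm]

theorem weighted_sum_card_M_le {l : ℕ} (hl : l ≤ k / 2 + 1) :
    ∑ j ∈ Icc 1 (l - 2), j * #(B.M j) + (l - 1) * ∑ j ∈ Icc (l - 1) (k / 2), #(B.M j)
      ≤ ∑ i, min (B.minCount i) (l - 1) := by
  have hdisj : Disjoint (Icc 1 (l - 2)) (Icc (l - 1) (k / 2)) := by
    simp only [disjoint_left, mem_Icc]
    omega
  have hsub : Icc 1 (l - 2) ∪ Icc (l - 1) (k / 2) ⊆ range (k / 2 + 1) := by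
    intro j
    simp only [mem_union, mem_Icc, mem_range]
    omega
  rw [B.sum_min_minCount_eq, mul_sum]
  calc _ = ∑ j ∈ Icc 1 (l - 2) ∪ Icc (l - 1) (k / 2), min j (l - 1) * #(B.M j) := by
        rw [sum_union hdisj]
        congr 1 <;> refine sum_congr rfl fun j hj => ?_ <;> rw [mem_Icc] at hj <;>
          congr 1 <;> omega
    _ ≤ _ := sum_le_sum_of_subset hsub

variable {B} {U : Finset (Fin n)}

theorem sign_eq_of_isControlSet (hU : IsControlSet B.F U) {i i' j : Fin n}
    (hi : i ∉ U) (hi' : i' ∉ U) (hj : j ∈ B.S i) (hj' : j ∈ B.S i') :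
    B.sign i j = B.sign i' j := by
  obtain ⟨z, hz⟩ := hU.exists_forall_notMem_eq fun _ => true
  rw [← (B.F_eq_true_iff i z).1 (hz i hi) j hj, (B.F_eq_true_iff i' z).1 (hz i' hi') j hj']

theorem exists_private_input (hU : IsControlSet B.F U) {i : Fin n} (hi : i ∉ U) :
    ∃ j ∈ B.S i, ∀ i' ∉ U, j ∈ B.S i' → i' = i := by
  obtain ⟨z, hz⟩ := hU.exists_forall_notMem_eq fun i' => decide (i' ≠ i)
  obtain ⟨j, hj, hzj⟩ : ∃ j ∈ B.S i, z j ≠ B.sign i j := by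
    by_contra! h
    simpa [(B.F_eq_true_iff i z).2 h] using hz i hi
  refine ⟨j, hj, fun i' hi' hj' => by_contra fun hne => hzj ?_⟩
  rw [(B.F_eq_true_iff i' z).1 (by simpa [hne] using hz i' hi') j hj',
    sign_eq_of_isControlSet hU hi' hi hj' hj]

theorem outdegIn_compl_le_max (hU : IsControlSet B.F U) (j : Fin n) :
    B.outdegIn Uᶜ j ≤ max (B.posCount j) (B.negCount j) := by
  obtain hempty | ⟨i₀, hi₀⟩ := {i ∈ Uᶜ | j ∈ B.S i}.eq_empty_or_nonempty
  · simp [outdegIn, hempty]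
  rw [mem_filter, mem_compl] at hi₀
  have hsub : {i ∈ Uᶜ | j ∈ B.S i} ⊆
      ({i | j ∈ B.S i ∧ B.sign i j = B.sign i₀ j} : Finset (Fin n)) := by
    intro i hi
    rw [mem_filter, mem_compl] at hi
    exact mem_filter.2 ⟨mem_univ i, hi.2, sign_eq_of_isControlSet hU hi.1 hi₀.1 hi.2 hi₀.2⟩
  refine (card_le_card hsub).trans ?_
  cases B.sign i₀ j
  · exact le_max_right _ _
  · exact le_max_left _ _

theorem outdegIn_compl_add_minCount_le (hU : IsControlSet B.F U) (j : Fin n) :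
    B.outdegIn Uᶜ j + B.minCount j ≤ k := by
  have := outdegIn_compl_le_max hU j
  have := B.posCount_add_negCount j
  rw [minCount]
  omega

theorem card_compl_le_card_outdegIn_eq_one (hU : IsControlSet B.F U) :
    #Uᶜ ≤ #{j | B.outdegIn Uᶜ j = 1} := by
  choose! P hPS hPuniq using fun i (hi : i ∈ Uᶜ) => exists_private_input hU (mem_compl.1 hi)
  refine card_le_card_of_injOn P (fun i hi => ?_) fun i₁ hi₁ i₂ hi₂ hP => ?_
  · refine mem_filter.2 ⟨mem_univ _, card_eq_one.2 ⟨i, ?_⟩⟩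
    ext i'
    simp only [mem_filter, mem_singleton, mem_compl]
    refine ⟨fun h => hPuniq i hi i' h.1 h.2, ?_⟩
    rintro rfl
    exact ⟨mem_compl.1 hi, hPS i' hi⟩
  · exact hPuniq i₂ hi₂ i₁ (mem_compl.1 hi₁) (hP ▸ hPS i₁ hi₁)

theorem sum_min_minCount_le (hU : IsControlSet B.F U) {l : ℕ} (hl1 : 1 ≤ l) (hlk : l ≤ k) :
    (k - l) * n + ∑ i, min (B.minCount i) (l - 1) ≤ (2 * k - l) * #U := by
  set T : Finset (Fin n) := {j | B.outdegIn Uᶜ j = 1}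
  set T' : Finset (Fin n) := {j | ¬B.outdegIn Uᶜ j = 1}
  have hnode (j : Fin n) :
      min (B.minCount j) (l - 1) + B.outdegIn Uᶜ j ≤ if B.outdegIn Uᶜ j = 1 then l else k := by
    have := outdegIn_compl_add_minCount_le hU j
    split_ifs <;> omega
  have hsum : ∑ j, min (B.minCount j) (l - 1) + k * #Uᶜ ≤ l * #T + k * #T' := by
    rw [← B.sum_outdegIn, ← sum_add_distrib, mul_comm l, mul_comm k, ← smul_eq_mul,
      ← smul_eq_mul, ← sum_const, ← sum_const, ← sum_ite]
    exact sum_le_sum fun j _ => hnode j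
  have hT : #T + #T' = n := by
    rw [card_filter_add_card_filter_not, card_univ, Fintype.card_fin]
  have hU' : #U + #Uᶜ = n := by
    rw [card_add_card_compl, Fintype.card_fin]
  have hpriv : #Uᶜ ≤ #T := card_compl_le_card_outdegIn_eq_one hU
  obtain ⟨d, rfl⟩ : ∃ d, k = l + d := ⟨k - l, by omega⟩
  have hT'U : d * #T' ≤ d * #U := Nat.mul_le_mul_left d (by omega)
  have hdn : d * n = d * #U + d * #Uᶜ := by rw [← mul_add, hU']
  have hln : l * #T + l * #T' = l * #U + l * #Uᶜ := by rw [← mul_add, ← mul_add, hT, hU']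
  rw [show l + d - l = d by omega, show 2 * (l + d) - l = l + 2 * d by omega]
  linarith

end AndNegBN

/-- For every `k`-`k`-AND-BN with negation (`k ≥ 2`) on `n` nodes and every
control node set `U`, for every `l = 1, …, ⌊k/2⌋ + 1`,
`|U| ≥ ((k−l)/(2k−l))·n + (1/(2k−l))·Σ_{j=1}^{l−2} j·|M_j|
  + ((l−1)/(2k−l))·Σ_{j=l−1}^{⌊k/2⌋} |M_j|`
(hence `|U|` is at least the maximum over `l`; empty sums are 0). -/
theorem stmt16 (n k : ℕ) (hk : 2 ≤ k) (B : AndNegBN n k) (U : Finset (Fin n))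
    (hU : IsControlSet B.F U) (l : ℕ) (hl1 : 1 ≤ l) (hl2 : l ≤ k / 2 + 1) :
    ((k : ℚ) - (l : ℚ)) / (2 * (k : ℚ) - (l : ℚ)) * n
      + 1 / (2 * (k : ℚ) - (l : ℚ)) *
          (∑ j ∈ Finset.Icc 1 (l - 2), (j : ℚ) * ((B.M j).card : ℚ))
      + ((l : ℚ) - 1) / (2 * (k : ℚ) - (l : ℚ)) *
          (∑ j ∈ Finset.Icc (l - 1) (k / 2), ((B.M j).card : ℚ))
      ≤ U.card := by
  have hlk : l ≤ k := by omega
  have hcount := (Nat.add_le_add_left (B.weighted_sum_card_M_le hl2) _).trans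
    (AndNegBN.sum_min_minCount_le hU hl1 hlk)
  have hq := (Nat.cast_le (α := ℚ)).2 hcount
  push_cast [Nat.cast_sub hlk, Nat.cast_sub (by omega : l ≤ 2 * k), Nat.cast_sub hl1] at hq
  have hD : (0 : ℚ) < 2 * k - l := by
    have : (l : ℚ) + 2 ≤ 2 * k := by exact_mod_cast (by omega : l + 2 ≤ 2 * k)
    linarith
  rw [div_mul_eq_mul_div, div_mul_eq_mul_div, div_mul_eq_mul_div, ← add_div, ← add_div,
    div_le_iff₀ hD]
  linarith

end BN
end
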